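/- arXiv:2102.13641 — 6 statements merged into one kernel-verified Lean document; each statement's English description precedes it below -/
import Mathlib

section
/- Let f : (0,∞) → ℝ be continuous. Suppose that for each a > 0 the sequence (f(a·n))_{n∈ℕ} converges to some value F(a). Then F is constant: there exists L such that F(a) = L for all a > 0. -/
open Filter Set

/-- Invariance under multiplication by a positive natural number. -/
lemma aux_nat_mul (f F : ℝ → ℝ)
    (hF : ∀ a > (0:ℝ), Tendsto (fun n : ℕ => f (a * n)) atTop (nhds (F a)))
    (a : ℝ) (ha : 0 < a) (k : ℕ) (hk : 0 < k) : F ((k : ℝ) * a) = F a := by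
  have h1 := hF ((k : ℝ) * a) (by positivity)
  have hmul : Tendsto (fun n : ℕ => k * n) atTop atTop := by
    apply tendsto_atTop_mono (fun n => Nat.le_mul_of_pos_left n hk) tendsto_id
  have h2 : Tendsto (fun n : ℕ => f (a * (k * n : ℕ))) atTop (nhds (F a)) :=
    (hF a ha).comp hmul
  have heq : (fun n : ℕ => f (a * (k * n : ℕ))) = fun n : ℕ => f (((k : ℝ) * a) * n) := by
    funext n; push_cast; ring_nf
  rw [heq] at h2
  exact tendsto_nhds_unique h1 h2

/-- Invariance under multiplication by a positive rational number. -/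
lemma aux_rat_mul (f F : ℝ → ℝ)
    (hF : ∀ a > (0:ℝ), Tendsto (fun n : ℕ => f (a * n)) atTop (nhds (F a)))
    (a : ℝ) (ha : 0 < a) (q : ℚ) (hq : 0 < q) : F ((q : ℝ) * a) = F a := by
  have hqR : (0:ℝ) < (q:ℝ) := by exact_mod_cast hq
  have hnum : 0 < q.num := Rat.num_pos.mpr hq
  have h1 := aux_nat_mul f F hF ((q:ℝ) * a) (by positivity) q.den q.den_pos
  have h2 := aux_nat_mul f F hF a ha q.num.toNat (by omega)
  have e1 : ((q.den : ℝ)) * ((q:ℝ) * a) = ((q.num.toNat : ℕ) : ℝ) * a := by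
    have hcast : ((q.num.toNat : ℕ) : ℝ) = (q.num : ℝ) := by
      exact_mod_cast Int.toNat_of_nonneg hnum.le
    have hq' : (q : ℝ) = (q.num : ℝ) / (q.den : ℝ) := by
      exact_mod_cast (Rat.num_div_den q).symm
    have hd : ((q.den : ℝ)) ≠ 0 := by positivity
    rw [hcast, hq']
    field_simp
  rw [e1, h2] at h1
  exact h1.symm

theorem stmt_0 (f F : ℝ → ℝ) (hf : ContinuousOn f (Set.Ioi 0))
    (hF : ∀ a > (0:ℝ), Tendsto (fun n : ℕ => f (a * n)) atTop (nhds (F a))) :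
    ∃ L : ℝ, ∀ a > (0:ℝ), F a = L := by
  refine ⟨F 1, ?_⟩
  -- main estimate: for every ε > 0 there is a point p such that every F a is 2ε-close to f p
  have main : ∀ ε > (0:ℝ), ∃ p : ℝ, ∀ a > (0:ℝ), |F a - f p| ≤ 2 * ε := by
    intro ε hε
    -- Baire category on the subtype Icc 1 2
    haveI : CompleteSpace (Icc (1:ℝ) 2) := isClosed_Icc.completeSpace_coe
    set C : ℕ → Set (Icc (1:ℝ) 2) :=
      fun N => {x | ∀ m ≥ N + 1, ∀ n ≥ N + 1, |f ((x:ℝ) * m) - f ((x:ℝ) * n)| ≤ ε} with hC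
    have hcont : ∀ m : ℕ, 1 ≤ m → Continuous (fun x : Icc (1:ℝ) 2 => f ((x:ℝ) * m)) := by
      intro m hm
      apply hf.comp_continuous
      · exact (continuous_subtype_val.mul continuous_const)
      · intro x
        have h1 : (1:ℝ) ≤ (x:ℝ) := x.2.1
        have h2 : (1:ℝ) ≤ (m:ℝ) := by exact_mod_cast hm
        have : (0:ℝ) < (x:ℝ) * m := by nlinarith
        exact this
    have hclosed : ∀ N, IsClosed (C N) := by
      intro N
      have : C N = ⋂ (m : ℕ) (_ : N + 1 ≤ m) (n : ℕ) (_ : N + 1 ≤ n),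
          {x : Icc (1:ℝ) 2 | |f ((x:ℝ) * m) - f ((x:ℝ) * n)| ≤ ε} := by
        ext x; simp [hC, Set.mem_iInter]
      rw [this]
      refine isClosed_iInter fun m => isClosed_iInter fun hm =>
        isClosed_iInter fun n => isClosed_iInter fun hn => ?_
      have hcm := hcont m (by omega)
      have hcn := hcont n (by omega)
      exact isClosed_le ((hcm.sub hcn).abs) continuous_const
    have hunion : ⋃ N, C N = univ := by
      rw [Set.eq_univ_iff_forall]
      intro x
      have hx0 : (0:ℝ) < (x:ℝ) := lt_of_lt_of_le one_pos x.2.1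
      have hcauchy : CauchySeq (fun n : ℕ => f ((x:ℝ) * n)) := (hF _ hx0).cauchySeq
      rw [Metric.cauchySeq_iff] at hcauchy
      obtain ⟨N, hN⟩ := hcauchy ε hε
      refine Set.mem_iUnion.mpr ⟨N, ?_⟩
      intro m hm n hn
      have := hN m (by omega) n (by omega)
      rw [Real.dist_eq] at this
      exact this.le
    haveI : Nonempty (Icc (1:ℝ) 2) := ⟨⟨1, by norm_num⟩⟩
    obtain ⟨N, x₀, hx₀⟩ := nonempty_interior_of_iUnion_of_closed hclosed hunion
    rw [mem_interior_iff_mem_nhds, Metric.mem_nhds_iff] at hx₀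
    obtain ⟨δ, hδ, hball⟩ := hx₀
    -- extract a real interval [b, c] inside C N
    set b : ℝ := max 1 ((x₀:ℝ) - δ/2) with hb
    set c : ℝ := min 2 ((x₀:ℝ) + δ/2) with hc
    have hx1 : (1:ℝ) ≤ (x₀:ℝ) := x₀.2.1
    have hx2 : ((x₀:ℝ)) ≤ 2 := x₀.2.2
    have hbc : b < c := by
      rw [hb, hc]
      rw [max_lt_iff] at *
      constructor <;> rw [lt_min_iff] <;> constructor <;> linarith
    have hb1 : (1:ℝ) ≤ b := le_max_left _ _
    have hc2 : c ≤ 2 := min_le_left _ _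
    have hmem : ∀ y : ℝ, y ∈ Icc b c →
        ∀ m ≥ N + 1, ∀ n ≥ N + 1, |f (y * m) - f (y * n)| ≤ ε := by
      intro y hy
      have hy12 : y ∈ Icc (1:ℝ) 2 := ⟨le_trans hb1 hy.1, le_trans hy.2 hc2⟩
      have hdist : dist (⟨y, hy12⟩ : Icc (1:ℝ) 2) x₀ < δ := by
        rw [Subtype.dist_eq, Real.dist_eq, abs_lt]
        have h1 : b ≤ y := hy.1
        have h2 : y ≤ c := hy.2
        have h3 : (x₀:ℝ) - δ/2 ≤ b := le_max_right _ _
        have h4 : c ≤ (x₀:ℝ) + δ/2 := min_le_right _ _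
        constructor <;> linarith
      exact hball hdist
    -- the midpoint
    set a' : ℝ := (b + c) / 2 with ha'
    have ha'mem : a' ∈ Icc b c := ⟨by rw [ha']; linarith, by rw [ha']; linarith⟩
    have ha'pos : (0:ℝ) < a' := by
      have := ha'mem.1; linarith
    set p : ℝ := a' * (N + 1 : ℕ) with hp
    have hppos : (0:ℝ) < p := by
      rw [hp]; positivity
    -- continuity of f at p within Ioi 0
    have hcw : ContinuousWithinAt f (Ioi (0:ℝ)) p := hf p hppos
    rw [Metric.continuousWithinAt_iff] at hcw
    obtain ⟨δ₂, hδ₂, hδ₂p⟩ := hcw ε hε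
    set r : ℝ := min (δ₂ / (N + 1 : ℕ)) ((c - b) / 2) with hr
    have hNp : (0:ℝ) < ((N:ℕ) + 1 : ℕ) := by positivity
    have hrpos : 0 < r := by
      rw [hr]
      apply lt_min
      · positivity
      · linarith
    refine ⟨p, ?_⟩
    intro a hapos
    -- find rational q with q * a ∈ (a' - r, a' + r)
    obtain ⟨q, hq1, hq2⟩ := exists_rat_btwn (show ((a' - r) / a : ℝ) < (a' + r) / a by
      gcongr <;> linarith)
    rw [div_lt_iff₀ hapos] at hq1
    rw [lt_div_iff₀ hapos] at hq2
    set y : ℝ := (q : ℝ) * a with hy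
    have hy1 : a' - r < y := by rw [hy]; linarith [hq1]
    have hy2 : y < a' + r := by rw [hy]; linarith [hq2]
    have hybc : y ∈ Icc b c := by
      have hr1 : r ≤ (c - b) / 2 := min_le_right _ _
      have ham : a' = (b + c)/2 := ha'
      constructor <;> [linarith; linarith]
    have hypos : (0:ℝ) < y := by
      have : b ≤ y := hybc.1
      linarith
    have hqpos : (0:ℚ) < q := by
      by_contra h
      push_neg at h
      have : (q:ℝ) ≤ 0 := by exact_mod_cast h
      nlinarith
    -- F a = F y
    have hFy : F y = F a := by
      rw [hy]; exact aux_rat_mul f F hF a hapos q hqpos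
    -- |F y - f (y * (N+1))| ≤ ε
    have hQy := hmem y hybc
    have est1 : |F y - f (y * ((N:ℕ) + 1 : ℕ))| ≤ ε := by
      have htend : Tendsto (fun n : ℕ => |f (y * n) - f (y * ((N:ℕ) + 1 : ℕ))|)
          atTop (nhds |F y - f (y * ((N:ℕ) + 1 : ℕ))|) :=
        (((hF y hypos).sub_const _).abs)
      apply le_of_tendsto htend
      filter_upwards [eventually_ge_atTop (N + 1)] with n hn
      exact hQy n hn (N + 1) le_rfl
    -- |f (y * (N+1)) - f p| ≤ ε
    have est2 : |f (y * ((N:ℕ) + 1 : ℕ)) - f p| ≤ ε := by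
      have hyN : y * ((N:ℕ) + 1 : ℕ) ∈ Ioi (0:ℝ) := by
        have : (0:ℝ) < y * ((N:ℕ) + 1 : ℕ) := by positivity
        exact this
      have hdist : dist (y * ((N:ℕ) + 1 : ℕ)) p < δ₂ := by
        rw [Real.dist_eq, hp]
        have h1 : |y - a'| < r := by rw [abs_lt]; constructor <;> linarith
        have h2 : r ≤ δ₂ / ((N:ℕ) + 1 : ℕ) := min_le_left _ _
        have : |y * ((N:ℕ) + 1 : ℕ) - a' * ((N:ℕ) + 1 : ℕ)| = |y - a'| * ((N:ℕ) + 1 : ℕ) := by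
          rw [← sub_mul, abs_mul, abs_of_pos hNp]
        rw [this]
        calc |y - a'| * ((N:ℕ) + 1 : ℕ) < r * ((N:ℕ) + 1 : ℕ) := by
              exact mul_lt_mul_of_pos_right h1 hNp
          _ ≤ (δ₂ / ((N:ℕ) + 1 : ℕ)) * ((N:ℕ) + 1 : ℕ) := by
              exact mul_le_mul_of_nonneg_right h2 hNp.le
          _ = δ₂ := by field_simp
      have := hδ₂p hyN hdist
      rw [Real.dist_eq] at this
      exact this.le
    calc |F a - f p| = |(F y - f (y * ((N:ℕ) + 1 : ℕ))) + (f (y * ((N:ℕ) + 1 : ℕ)) - f p)| := by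
          rw [← hFy]; ring_nf
      _ ≤ |F y - f (y * ((N:ℕ) + 1 : ℕ))| + |f (y * ((N:ℕ) + 1 : ℕ)) - f p| := abs_add_le _ _
      _ ≤ 2 * ε := by linarith
  -- conclude: |F a - F 1| ≤ 4ε for all ε, hence equal
  intro a hapos
  have key : ∀ ε > (0:ℝ), |F a - F 1| ≤ 4 * ε := by
    intro ε hε
    obtain ⟨p, hp⟩ := main ε hε
    have h1 := hp a hapos
    have h2 := hp 1 one_pos
    calc |F a - F 1| = |(F a - f p) - (F 1 - f p)| := by ring_nf
      _ ≤ |F a - f p| + |F 1 - f p| := abs_sub _ _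
      _ ≤ 4 * ε := by linarith
  have : |F a - F 1| ≤ 0 := by
    refine le_of_forall_pos_le_add ?_
    intro ε hε
    have := key (ε/4) (by linarith)
    linarith
  have := abs_nonneg (F a - F 1)
  have h0 : |F a - F 1| = 0 := le_antisymm ‹_› ‹_›
  have := abs_eq_zero.mp h0
  linarith [this]
end

section
/- Let f : (0,∞) → ℝ be continuous. Suppose that for each a > 0 the limit lim_{n→∞} f(a·n) exists and equals L (the same L for all a). Then lim_{x→∞} f(x) = L. -/
open Filter Set


lemma croft_key (f : ℝ → ℝ) (L ε : ℝ) (hf : ContinuousOn f (Set.Ioi 0))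
    (hL : ∀ a > (0:ℝ), Tendsto (fun n : ℕ => f (a * n)) atTop (nhds L)) (hε : 0 < ε) :
    ∃ c d : ℝ, 1 ≤ c ∧ c < d ∧ d ≤ 2 ∧ ∃ N : ℕ,
      ∀ x ∈ Icc c d, ∀ n : ℕ, N ≤ n → |f (x * n) - L| ≤ ε := by
  set X := Icc (1:ℝ) 2
  have hXne : Nonempty X := ⟨⟨1, by norm_num, by norm_num⟩⟩
  set E : ℕ → Set X := fun N => {a : X | ∀ n : ℕ, N ≤ n → |f ((a:ℝ) * n) - L| ≤ ε} with hE
  have hclosed : ∀ N, IsClosed (E N) := by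
    intro N
    have : E N = ⋂ n : ℕ, ⋂ (_ : N ≤ n), {a : X | |f ((a:ℝ) * n) - L| ≤ ε} := by
      ext a; simp [hE]
    rw [this]
    refine isClosed_iInter fun n => isClosed_iInter fun _ => ?_
    have hcont : Continuous fun a : X => f ((a:ℝ) * n) := by
      rcases Nat.eq_zero_or_pos n with h0 | hpos
      · simp only [h0, Nat.cast_zero, mul_zero]; exact continuous_const
      · refine hf.comp_continuous (by continuity) fun a => ?_
        have h1 : (1:ℝ) ≤ (a:ℝ) := a.2.1
        have h2 : (1:ℝ) ≤ (n:ℝ) := by exact_mod_cast hpos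
        have : (0:ℝ) < (a:ℝ) * n := by nlinarith
        exact this
    exact isClosed_le (by continuity) continuous_const
  have hcover : ⋃ N, E N = univ := by
    ext a
    simp only [mem_iUnion, mem_univ, iff_true]
    have hapos : (0:ℝ) < (a:ℝ) := lt_of_lt_of_le one_pos a.2.1
    have := (hL a hapos)
    rw [Metric.tendsto_atTop] at this
    obtain ⟨N, hN⟩ := this ε hε
    exact ⟨N, fun n hn => by
      have := hN n hn; rw [Real.dist_eq] at this; exact this.le⟩
  obtain ⟨N, ⟨a, ha⟩⟩ := nonempty_interior_of_iUnion_of_closed hclosed hcover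
  rw [mem_interior] at ha
  obtain ⟨t, hts, htO, hat⟩ := ha
  obtain ⟨δ, hδ, hball⟩ := Metric.isOpen_iff.mp htO a hat
  have ha1 : (1:ℝ) ≤ (a:ℝ) := a.2.1
  have ha2 : (a:ℝ) ≤ 2 := a.2.2
  refine ⟨max ((a:ℝ) - δ/3) 1, min ((a:ℝ) + δ/3) 2, le_max_right _ _,
    max_lt (lt_min (by linarith) (by linarith)) (lt_min (by linarith) (by norm_num)),
    min_le_right _ _, N, ?_⟩
  intro x hx n hn
  have hx1 : (1:ℝ) ≤ x := le_trans (le_max_right _ _) hx.1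
  have hx2 : x ≤ 2 := le_trans hx.2 (min_le_right _ _)
  have hxa : |x - (a:ℝ)| < δ := by
    have l1 : (a:ℝ) - δ/3 ≤ x := le_trans (le_max_left _ _) hx.1
    have l2 : x ≤ (a:ℝ) + δ/3 := le_trans hx.2 (min_le_left _ _)
    rw [abs_sub_lt_iff]; constructor <;> linarith
  have hmem : (⟨x, hx1, hx2⟩ : X) ∈ Metric.ball a δ := by
    rw [Metric.mem_ball, Subtype.dist_eq, Real.dist_eq]; exact hxa
  exact hts (hball hmem) n hn

theorem stmt_1 (f : ℝ → ℝ) (L : ℝ) (hf : ContinuousOn f (Set.Ioi 0))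
    (hL : ∀ a > (0:ℝ), Tendsto (fun n : ℕ => f (a * n)) atTop (nhds L)) :
    Tendsto f atTop (nhds L) := by
  rw [Metric.tendsto_atTop]
  intro ε hε
  obtain ⟨c, d, hc1, hcd, hd2, N, hN⟩ := croft_key f L (ε/2) hf hL (by linarith)
  have hc0 : (0:ℝ) < c := lt_of_lt_of_le one_pos hc1
  have hd0 : (0:ℝ) < d := lt_trans hc0 hcd
  refine ⟨max (↑N * d) (c * d / (d - c)) + d, fun x hx => ?_⟩
  have hmax0 : (0:ℝ) ≤ max (↑N * d) (c * d / (d - c)) := le_max_of_le_left (mul_nonneg (Nat.cast_nonneg N) hd0.le)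
  have hx1 : ↑N * d ≤ x := by have := le_max_left (↑N * d) (c * d / (d - c)); linarith
  have hx2 : c * d / (d - c) ≤ x := by
    have := le_max_right (↑N * d) (c * d / (d - c)); linarith
  have hx3 : d ≤ x := by linarith
  set n : ℕ := ⌈x / d⌉₊ with hn
  have hxd0 : 0 < x / d := div_pos (by linarith) hd0
  have hn0 : 0 < n := Nat.ceil_pos.mpr hxd0
  have hle : x / d ≤ (n:ℝ) := Nat.le_ceil _
  have hlt : (n:ℝ) < x / d + 1 := Nat.ceil_lt_add_one hxd0.le
  have hnN : N ≤ n := by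
    have h1 : (N:ℝ) ≤ x / d := by rw [le_div_iff₀ hd0]; linarith
    exact_mod_cast h1.trans hle
  have hcn : c * n ≤ x := by
    have hdc : 0 < d - c := by linarith
    have h2 : c * d ≤ x * (d - c) := (div_le_iff₀ hdc).mp hx2
    have hxd : d * (x / d) = x := by field_simp
    have h3 : d * (n:ℝ) < x + d := by nlinarith [mul_lt_mul_of_pos_left hlt hd0]
    nlinarith [mul_lt_mul_of_pos_left h3 hc0]
  have hdn : x ≤ d * n := by
    have := (div_le_iff₀ hd0).mp hle; linarith
  have hnR : (0:ℝ) < (n:ℝ) := by exact_mod_cast hn0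
  have hmem : x / n ∈ Icc c d := by
    constructor
    · rw [le_div_iff₀ hnR]; linarith
    · rw [div_le_iff₀ hnR]; linarith
  have := hN (x / n) hmem n hnN
  rw [div_mul_cancel₀ x hnR.ne'] at this
  rw [Real.dist_eq]
  linarith [this]
end

section
/- Let f : (0,∞) → ℝ be continuous and suppose for each a > 0 the sequence (f(a n))_{n≥1} converges. Then lim_{x→∞} f(x) exists. -/
open Filter Set

theorem stmt_2 (f : ℝ → ℝ) (hf : ContinuousOn f (Set.Ioi 0))
    (h : ∀ a > (0:ℝ), ∃ l : ℝ, Tendsto (fun n : ℕ => f (a * n)) atTop (nhds l)) :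
    ∃ L : ℝ, Tendsto f atTop (nhds L) := by
  classical
  set L : ℝ → ℝ := fun a => if ha : 0 < a then (h a ha).choose else 0 with hLdef
  have hL : ∀ a : ℝ, 0 < a → Tendsto (fun n : ℕ => f (a * n)) atTop (nhds (L a)) := by
    intro a ha
    simp only [hLdef, dif_pos ha]
    exact (h a ha).choose_spec
  have hLnat : ∀ a : ℝ, 0 < a → ∀ k : ℕ, 0 < k → L (k * a) = L a := by
    intro a ha k hk
    have h1 : Tendsto (fun n : ℕ => f ((k*a) * n)) atTop (nhds (L (k*a))) :=
      hL _ (by positivity)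
    have h2 : Tendsto (fun n : ℕ => f (a * ((k*n : ℕ) : ℝ))) atTop (nhds (L a)) := by
      refine (hL a ha).comp ?_
      exact tendsto_atTop_mono (fun n => Nat.le_mul_of_pos_left n hk) tendsto_id
    have h3 : (fun n : ℕ => f (a * ((k*n : ℕ) : ℝ))) = fun n : ℕ => f ((k*a) * n) := by
      funext n; push_cast; ring_nf
    rw [← h3] at h1
    exact tendsto_nhds_unique h1 h2
  have hLrat : ∀ a : ℝ, 0 < a → ∀ q : ℚ, 0 < q → L (q * a) = L a := by
    intro a ha q hq
    have hden : (0:ℝ) < (q.den : ℝ) := by exact_mod_cast q.pos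
    have hb : 0 < a / q.den := by positivity
    have hnum : 0 < q.num.toNat := by
      have := Rat.num_pos.mpr hq
      omega
    have h1 : (q : ℝ) * a = (q.num.toNat : ℕ) * (a / q.den) := by
      have hn : ((q.num.toNat : ℕ) : ℝ) = (q.num : ℝ) := by
        exact_mod_cast Int.toNat_of_nonneg (Rat.num_pos.mpr hq).le
      rw [hn, Rat.cast_def]
      field_simp
    have h2 : ((q.den : ℕ) : ℝ) * (a / q.den) = a := by field_simp
    calc L ((q:ℝ) * a) = L ((q.num.toNat : ℕ) * (a / q.den)) := by rw [h1]
      _ = L (a / q.den) := hLnat _ hb _ hnum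
      _ = L ((q.den : ℕ) * (a / q.den)) := (hLnat _ hb _ q.pos).symm
      _ = L a := by rw [h2]
  rw [← cauchy_map_iff_exists_tendsto, Metric.cauchy_iff]
  refine ⟨map_neBot, fun ε hε => ?_⟩
  set ε' : ℝ := ε/8 with hε'def
  have hε' : 0 < ε' := by positivity
  obtain ⟨n, a, b, ha0, hab, hFab⟩ : ∃ n : ℕ, ∃ a b : ℝ, 0 < a ∧ a < b ∧
      ∀ c ∈ Icc a b, ∀ m ≥ n+1, ∀ k ≥ n+1, |f (c*m) - f (c*k)| ≤ ε' := by
    set F : ℕ → Set ℝ := fun n =>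
      {c | ∀ m ≥ n+1, ∀ k ≥ n+1, |f (c*m) - f (c*k)| ≤ ε'} with hFdef
    set G : ℕ → Set ℝ := fun n => (F n ∩ Icc 1 2) ∪ (Iic 1 ∪ Ici 2) with hGdef
    have hGclosed : ∀ n, IsClosed (G n) := by
      intro n
      refine IsClosed.union ?_ (isClosed_Iic.union isClosed_Ici)
      have heq : F n ∩ Icc 1 2 =
          ⋂ (m : ℕ) (_ : n+1 ≤ m) (k : ℕ) (_ : n+1 ≤ k),
            (Icc (1:ℝ) 2 ∩ (fun c => |f (c*m) - f (c*k)|) ⁻¹' (Iic ε')) := by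
        ext c
        simp only [hFdef, mem_inter_iff, mem_setOf_eq, mem_iInter, mem_preimage, mem_Iic]
        constructor
        · rintro ⟨h1, h2⟩ m hm k hk
          exact ⟨h2, h1 m hm k hk⟩
        · intro h1
          exact ⟨fun m hm k hk => (h1 m hm k hk).2, (h1 (n+1) le_rfl (n+1) le_rfl).1⟩
      rw [heq]
      refine isClosed_iInter fun m => isClosed_iInter fun hm =>
        isClosed_iInter fun k => isClosed_iInter fun hk => ?_
      have hmaps : ∀ j : ℕ, n+1 ≤ j → ContinuousOn (fun c : ℝ => f (c * j)) (Icc 1 2) := by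
        intro j hj
        refine hf.comp (continuous_id.mul continuous_const).continuousOn ?_
        intro c hc
        have : (0:ℝ) < j := by
          have : (1:ℕ) ≤ j := le_trans (by omega) hj
          exact_mod_cast Nat.pos_of_ne_zero (by omega)
        have := hc.1
        simp only [id, mem_Ioi]
        nlinarith
      have hcont : ContinuousOn (fun c : ℝ => |f (c*m) - f (c*k)|) (Icc 1 2) :=
        ((hmaps m hm).sub (hmaps k hk)).abs
      exact hcont.preimage_isClosed_of_isClosed isClosed_Icc isClosed_Iic
    have hGunion : ⋃ n, G n = univ := by
      ext c
      simp only [mem_iUnion, mem_univ, iff_true]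
      rcases le_or_gt c 1 with hc | hc
      · exact ⟨0, Or.inr (Or.inl hc)⟩
      rcases le_or_gt 2 c with hc2 | hc2
      · exact ⟨0, Or.inr (Or.inr hc2)⟩
      have hcpos : 0 < c := by linarith
      have hcauchy : CauchySeq (fun n : ℕ => f (c * n)) := (hL c hcpos).cauchySeq
      rw [Metric.cauchySeq_iff] at hcauchy
      obtain ⟨N, hN⟩ := hcauchy ε' hε'
      refine ⟨N, Or.inl ⟨?_, by constructor <;> linarith⟩⟩
      intro m hm k hk
      have := hN m (by omega) k (by omega)
      rw [Real.dist_eq] at this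
      exact this.le
    have hdense := dense_iUnion_interior_of_closed hGclosed hGunion
    obtain ⟨x, hx1, hx2⟩ := hdense.exists_mem_open isOpen_Ioo
      (nonempty_Ioo.mpr (by norm_num : (1:ℝ) < 2))
    rw [mem_iUnion] at hx1
    obtain ⟨n, hxn⟩ := hx1
    have hopen : IsOpen (interior (G n) ∩ Ioo 1 2) := isOpen_interior.inter isOpen_Ioo
    rw [Metric.isOpen_iff] at hopen
    obtain ⟨r, hr, hball⟩ := hopen x ⟨hxn, hx2⟩
    refine ⟨n, x - r/2, x + r/2, ?_, by linarith, ?_⟩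
    · have : x - r/2 ∈ Metric.ball x r := by
        rw [Metric.mem_ball, Real.dist_eq, abs_of_nonpos (by linarith)]
        linarith
      have := (hball this).2.1
      linarith
    · intro c hc m hm k hk
      have hcball : c ∈ Metric.ball x r := by
        have h1 := hc.1; have h2 := hc.2
        simp only [Metric.mem_ball, Real.dist_eq]
        rw [abs_sub_lt_iff]
        constructor <;> linarith
      obtain ⟨hcint, hcoo⟩ := hball hcball
      have hcG : c ∈ G n := interior_subset hcint
      rcases hcG with hcG | hcG
      · exact hcG.1 m hm k hk
      · rcases hcG with hcG | hcG
        · exact absurd hcoo.1 (by simpa using hcG)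
        · exact absurd hcoo.2 (by simpa [not_lt] using hcG)
  obtain ⟨N, hN⟩ : ∃ N : ℝ, ∀ x ≥ N, ∀ y ≥ N, |f x - f y| ≤ 7*ε' := by
    have hb0 : 0 < b := lt_trans ha0 hab
    have hn1 : (0:ℝ) < ((n:ℝ)+1) := by positivity
    have hL2 : ∀ c ∈ Icc a b, |f (c*((n+1 : ℕ) : ℝ)) - L c| ≤ ε' := by
      intro c hc
      have hcpos : 0 < c := lt_of_lt_of_le ha0 hc.1
      have htend : Tendsto (fun m : ℕ => |f (c*((n+1 : ℕ) : ℝ)) - f (c*m)|) atTop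
          (nhds |f (c*((n+1 : ℕ) : ℝ)) - L c|) := (tendsto_const_nhds.sub (hL c hcpos)).abs
      refine le_of_tendsto htend ?_
      filter_upwards [eventually_ge_atTop (n+1)] with m hm
      exact hFab c hc (n+1) le_rfl m hm
    have hK : IsCompact (Icc (a*((n+1 : ℕ) : ℝ)) (b*((n+1 : ℕ) : ℝ))) := isCompact_Icc
    have hcastn : ((n+1 : ℕ) : ℝ) = (n:ℝ)+1 := by push_cast; ring
    have hKsub : Icc (a*((n+1 : ℕ) : ℝ)) (b*((n+1 : ℕ) : ℝ)) ⊆ Ioi 0 := by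
      intro u hu
      have h1 := hu.1
      rw [hcastn] at h1
      simp only [mem_Ioi]
      nlinarith
    have hUC := hK.uniformContinuousOn_of_continuous (hf.mono hKsub)
    rw [Metric.uniformContinuousOn_iff] at hUC
    obtain ⟨δ, hδ0, hδ⟩ := hUC ε' hε'
    have hmemK : ∀ c ∈ Icc a b, c*((n+1 : ℕ) : ℝ) ∈ Icc (a*((n+1 : ℕ) : ℝ)) (b*((n+1 : ℕ) : ℝ)) := by
      intro c hc
      constructor
      · exact mul_le_mul_of_nonneg_right hc.1 (by positivity)
      · exact mul_le_mul_of_nonneg_right hc.2 (by positivity)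
    have hLclose : ∀ c ∈ Icc a b, ∀ c' ∈ Icc a b, |L c - L c'| ≤ 3*ε' := by
      intro c hc c' hc'
      have hc'pos : 0 < c' := lt_of_lt_of_le ha0 hc'.1
      set δ'' : ℝ := min (δ / ((n:ℝ)+1)) (b - a) with hδ''def
      have hδ''0 : 0 < δ'' := lt_min (by positivity) (by linarith)
      set lo : ℝ := max a (c - δ'') with hlodef
      set hi : ℝ := min b (c + δ'') with hhidef
      have hlo0 : 0 < lo := lt_of_lt_of_le ha0 (le_max_left _ _)
      have hlohi : lo < hi := by
        rcases hc with ⟨hc1, hc2⟩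
        rw [hlodef, hhidef]
        apply max_lt <;> apply lt_min
        · exact hab
        · linarith
        · linarith
        · linarith
      obtain ⟨q, hq1, hq2⟩ := exists_rat_btwn (show lo/c' < hi/c' by gcongr)
      have hq0 : 0 < q := by
        have : (0:ℝ) < (q:ℝ) := lt_trans (by positivity) hq1
        exact_mod_cast this
      have hqc1 : lo < (q:ℝ) * c' := (div_lt_iff₀ hc'pos).mp hq1
      have hqc2 : (q:ℝ) * c' < hi := by
        have := (lt_div_iff₀ hc'pos).mp hq2
        linarith
      have hqmem : (q:ℝ) * c' ∈ Icc a b :=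
        ⟨le_of_lt (lt_of_le_of_lt (le_max_left _ _) hqc1),
         le_of_lt (lt_of_lt_of_le hqc2 (min_le_left _ _))⟩
      have hclose : |c - (q:ℝ)*c'| < δ'' := by
        rw [abs_sub_lt_iff]
        constructor
        · have := lt_of_le_of_lt (le_max_right _ _) hqc1; linarith
        · have := lt_of_lt_of_le hqc2 (min_le_right _ _); linarith
      have hmid : |f (c*((n+1 : ℕ) : ℝ)) - f (((q:ℝ)*c')*((n+1 : ℕ) : ℝ))| < ε' := by
        have hd : dist (c*((n+1 : ℕ) : ℝ)) (((q:ℝ)*c')*((n+1 : ℕ) : ℝ)) < δ := by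
          rw [Real.dist_eq, hcastn, ← sub_mul, abs_mul, abs_of_pos hn1]
          have h1 : δ'' ≤ δ / ((n:ℝ)+1) := min_le_left _ _
          calc |c - (q:ℝ)*c'| * ((n:ℝ)+1) < δ'' * ((n:ℝ)+1) := by
                exact mul_lt_mul_of_pos_right hclose hn1
            _ ≤ (δ / ((n:ℝ)+1)) * ((n:ℝ)+1) := by
                exact mul_le_mul_of_nonneg_right h1 (by positivity)
            _ = δ := by field_simp
        have := hδ _ (hmemK c hc) _ (hmemK _ hqmem) hd
        rwa [Real.dist_eq] at this
      have hqL : L ((q:ℝ) * c') = L c' := hLrat c' hc'pos q hq0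
      have t1 := hL2 c hc
      have t2 := hL2 _ hqmem
      rw [hqL] at t2
      calc |L c - L c'| = |(L c - f (c*((n+1 : ℕ) : ℝ)))
            + (f (c*((n+1 : ℕ) : ℝ)) - f (((q:ℝ)*c')*((n+1 : ℕ) : ℝ)))
            + (f (((q:ℝ)*c')*((n+1 : ℕ) : ℝ)) - L c')| := by ring_nf
        _ ≤ |L c - f (c*((n+1 : ℕ) : ℝ))|
            + |f (c*((n+1 : ℕ) : ℝ)) - f (((q:ℝ)*c')*((n+1 : ℕ) : ℝ))|
            + |f (((q:ℝ)*c')*((n+1 : ℕ) : ℝ)) - L c'| := abs_add_three _ _ _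
        _ ≤ ε' + ε' + ε' := by
            refine add_le_add (add_le_add ?_ hmid.le) t2
            rw [abs_sub_comm]; exact t1
        _ = 3*ε' := by ring
    -- representation of large x
    set N : ℝ := max (((n+1 : ℕ) : ℝ)*b) (a*b/(b-a)) with hNdef
    have hrep : ∀ x ≥ N, ∃ c ∈ Icc a b, |f x - L c| ≤ 2*ε' := by
      intro x hx
      set m : ℕ := ⌈x/b⌉₊ with hmdef
      have hxb1 : ((n+1 : ℕ) : ℝ) ≤ x/b := by
        rw [le_div_iff₀ hb0]
        exact le_trans (le_max_left _ _) hx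
      have hxb0 : (0:ℝ) ≤ x/b := le_trans (by positivity) hxb1
      have hmge : (x/b : ℝ) ≤ m := Nat.le_ceil _
      have hmn : n+1 ≤ m := by exact_mod_cast le_trans hxb1 hmge
      have hm0 : 0 < m := by omega
      have hm0' : (0:ℝ) < (m:ℝ) := by exact_mod_cast hm0
      have hmlt : (m:ℝ) < x/b + 1 := Nat.ceil_lt_add_one hxb0
      have hba : (0:ℝ) < b - a := by linarith
      have h1 : a*b ≤ x*(b-a) := (div_le_iff₀ hba).mp (le_trans (le_max_right _ _) hx)
      have h2 : x/b + 1 ≤ x/a := by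
        rw [div_add' _ _ _ hb0.ne', div_le_div_iff₀ hb0 ha0]
        nlinarith
      have hmxa : (m:ℝ) < x/a := lt_of_lt_of_le hmlt h2
      have hc : x/(m:ℝ) ∈ Icc a b := by
        constructor
        · rw [le_div_iff₀ hm0']
          have := (lt_div_iff₀ ha0).mp hmxa
          linarith
        · rw [div_le_iff₀ hm0']
          have := (div_le_iff₀ hb0).mp (le_of_le_of_eq hmge rfl)
          nlinarith [hmge]
      have hcm : (x/(m:ℝ)) * (m:ℝ) = x := div_mul_cancel₀ x hm0'.ne'
      have hest : |f x - f ((x/(m:ℝ))*((n+1 : ℕ) : ℝ))| ≤ ε' := by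
        have := hFab _ hc m hmn (n+1) le_rfl
        rwa [hcm] at this
      refine ⟨x/(m:ℝ), hc, ?_⟩
      have := hL2 _ hc
      calc |f x - L (x/(m:ℝ))| ≤ |f x - f ((x/(m:ℝ))*((n+1 : ℕ) : ℝ))|
            + |f ((x/(m:ℝ))*((n+1 : ℕ) : ℝ)) - L (x/(m:ℝ))| := abs_sub_le _ _ _
        _ ≤ ε' + ε' := add_le_add hest this
        _ = 2*ε' := by ring
    refine ⟨N, fun x hx y hy => ?_⟩
    obtain ⟨cx, hcx, hx2⟩ := hrep x hx
    obtain ⟨cy, hcy, hy2⟩ := hrep y hy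
    have hmidL := hLclose cx hcx cy hcy
    calc |f x - f y| ≤ |f x - L cx| + |L cx - L cy| + |L cy - f y| := by
          have := abs_add_three (f x - L cx) (L cx - L cy) (L cy - f y)
          simpa using this
      _ ≤ 2*ε' + 3*ε' + 2*ε' := by
          refine add_le_add (add_le_add hx2 hmidL) ?_
          rw [abs_sub_comm]; exact hy2
      _ = 7*ε' := by ring
  refine ⟨f '' Ici N, image_mem_map (Ici_mem_atTop N), ?_⟩
  rintro _ ⟨u, hu, rfl⟩ _ ⟨v, hv, rfl⟩
  rw [Real.dist_eq]
  calc |f u - f v| ≤ 7*ε' := hN u hu v hv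
    _ < ε := by rw [hε'def]; linarith
end

section
/- Define f(x) = sin(2π ln x) and ξ_n = exp(n + 1/n). Then for every a > 0, lim_{n→∞} f(a ξ_n) = sin(2π ln a), and the limit function a ↦ sin(2π ln a) is not constant. -/
open Filter Real

theorem stmt_3 (f : ℝ → ℝ) (ξ : ℕ → ℝ)
    (hfdef : ∀ x : ℝ, f x = Real.sin (2 * Real.pi * Real.log x))
    (hξ : ∀ n : ℕ, ξ n = Real.exp ((n : ℝ) + 1 / (n : ℝ))) :
    (∀ a > (0:ℝ),
      Tendsto (fun n : ℕ => f (a * ξ n)) atTop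
        (nhds (Real.sin (2 * Real.pi * Real.log a)))) ∧
    ¬ (∃ c : ℝ, ∀ a > (0:ℝ), Real.sin (2 * Real.pi * Real.log a) = c) := by
  constructor
  · intro a ha
    have key : ∀ n : ℕ, f (a * ξ n) =
        Real.sin (2 * Real.pi * Real.log a + 2 * Real.pi / (n : ℝ)) := by
      intro n
      rw [hfdef, hξ, Real.log_mul (ne_of_gt ha) (Real.exp_ne_zero _), Real.log_exp]
      have : 2 * Real.pi * (Real.log a + ((n : ℝ) + 1 / (n : ℝ)))
          = (2 * Real.pi * Real.log a + 2 * Real.pi / (n : ℝ)) + (n : ℤ) * (2 * Real.pi) := by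
        push_cast; ring
      rw [this, Real.sin_add_int_mul_two_pi]
    simp only [key]
    have h1 : Tendsto (fun n : ℕ => 2 * Real.pi * Real.log a + 2 * Real.pi / (n : ℝ))
        atTop (nhds (2 * Real.pi * Real.log a + 0)) :=
      tendsto_const_nhds.add (tendsto_const_div_atTop_nhds_zero_nat _)
    rw [add_zero] at h1
    exact (Real.continuous_sin.continuousAt.tendsto).comp h1
  · rintro ⟨c, hc⟩
    have h0 := hc 1 one_pos
    have h1 := hc (Real.exp (1/4)) (Real.exp_pos _)
    rw [Real.log_one] at h0
    rw [Real.log_exp] at h1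
    have : 2 * Real.pi * (1/4 : ℝ) = Real.pi / 2 := by ring
    rw [this, Real.sin_pi_div_two] at h1
    simp at h0
    linarith
end

section
/- Let f : (0,∞) → ℝ be measurable and bounded (f ∈ L^∞(0,∞)). Suppose that for almost every a > 0 the limit F(a) = lim_{n→∞} f(a n) exists. Then F is equal to a constant almost everywhere. -/
open Filter Set MeasureTheory Topology

/-!
Writing a positive rational as `q = p / d`, the sequences `n ↦ f (q a (d n))` and `n ↦ f (a (p n))`
coincide, so `F (q a) = F a` for almost every `a`. A set `s ⊆ (0, ∞)` that is a.e. invariant under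
all rational dilations satisfies `|s ∩ (0, q)| = q |s ∩ (0, 1)|` for rational `q > 0`, so Lebesgue
measure restricted to `s` is a multiple `κ` of Lebesgue measure on `(0, ∞)`; hence `s` is null
(`κ = 0`) or conull (`κ ≠ 0`). Applied to the preimages under `F` of a countable separating family
of Borel sets, this makes `F` a.e. constant.
-/

local notation "μ₊" => volume.restrict (Ioi (0 : ℝ))

theorem Real.measure_ext_Iio_rat {μ ν : Measure ℝ} (hfin : ∀ q : ℚ, μ (Iio q) ≠ ⊤)
    (h : ∀ q : ℚ, μ (Iio q) = ν (Iio q)) : μ = ν := by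
  refine Measure.ext_of_generateFrom_of_iUnion _ (fun n : ℕ => Iio (n : ℚ))
    (BorelSpace.measurable_eq.trans Real.borel_eq_generateFrom_Iio_rat) Real.isPiSystem_Iio_rat
    ?_ (fun n => mem_iUnion.2 ⟨n, rfl⟩) (fun n => hfin n) ?_
  · exact iUnion_eq_univ_iff.2 fun x => (exists_nat_gt x).imp fun n hn => by simpa using hn
  · simp only [mem_iUnion, mem_singleton_iff]
    rintro _ ⟨q, rfl⟩
    exact h q

theorem MeasureTheory.Measure.map_restrict_eq_smul_of_preimage_ae_eq {α : Type*}
    [MeasurableSpace α] {μ : Measure α} {f : α → α} (hf : MeasurableEmbedding f) {k : ENNReal}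
    (hμ : μ.map f = k • μ) {s : Set α} (hs : f ⁻¹' s =ᵐ[μ] s) :
    (μ.restrict s).map f = k • μ.restrict s := by
  rw [← Measure.restrict_congr_set hs, ← hf.restrict_map, hμ, Measure.restrict_smul,
    Measure.restrict_congr_set hs]

theorem measure_Iio_eq_of_map_mul_left {ν : Measure ℝ} {c : ℝ} (hc : 0 < c)
    (h : ν.map (c * ·) = ENNReal.ofReal c⁻¹ • ν) : ν (Iio c) = ENNReal.ofReal c * ν (Iio 1) := by
  have hpre : (c * ·) ⁻¹' Iio c = Iio 1 := by
    ext x; simp [mul_lt_iff_lt_one_right hc]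
  have h1 := congrArg (· (Iio c)) h
  simp only [(measurableEmbedding_mulLeft₀ hc.ne').map_apply, hpre, Measure.smul_apply,
    smul_eq_mul] at h1
  rw [h1, ← mul_assoc, ← ENNReal.ofReal_mul hc.le, mul_inv_cancel₀ hc.ne', ENNReal.ofReal_one,
    one_mul]

theorem volume_restrict_Ioi_Iio (x : ℝ) : μ₊ (Iio x) = ENNReal.ofReal x := by
  rw [Measure.restrict_apply measurableSet_Iio, Iio_inter_Ioi, Real.volume_Ioo, sub_zero]

theorem map_mul_left_volume_restrict_Ioi {c : ℝ} (hc : 0 < c) :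
    μ₊.map (c * ·) = ENNReal.ofReal c⁻¹ • μ₊ := by
  have hpre : (c * ·) ⁻¹' Ioi (0 : ℝ) = Ioi 0 := by
    ext x; simp [mul_pos_iff_of_pos_left hc]
  calc μ₊.map (c * ·) = (volume.restrict ((c * ·) ⁻¹' Ioi (0 : ℝ))).map (c * ·) := by rw [hpre]
    _ = ENNReal.ofReal c⁻¹ • μ₊ := by
      rw [← (measurableEmbedding_mulLeft₀ hc.ne').restrict_map, Real.map_volume_mul_left hc.ne',
        Measure.restrict_smul, abs_of_pos (inv_pos.2 hc)]

theorem quasiMeasurePreserving_mul_left_volume_restrict_Ioi {c : ℝ} (hc : 0 < c) :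
    Measure.QuasiMeasurePreserving (c * ·) μ₊ μ₊ :=
  ⟨measurable_const_mul c, by
    rw [map_mul_left_volume_restrict_Ioi hc]; exact Measure.smul_absolutelyContinuous⟩

theorem restrict_eq_smul_of_rat_dilation_invariant {s : Set ℝ}
    (hs : ∀ q : ℚ, 0 < q → (fun x => (q : ℝ) * x) ⁻¹' s =ᵐ[μ₊] s) :
    μ₊.restrict s = μ₊.restrict s (Iio 1) • μ₊ := by
  have hle : ∀ x : ℝ, μ₊.restrict s (Iio x) ≤ ENNReal.ofReal x := fun x =>
    (Measure.restrict_le_self _).trans_eq (volume_restrict_Ioi_Iio x)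
  refine Real.measure_ext_Iio_rat (fun q => ((hle q).trans_lt ENNReal.ofReal_lt_top).ne)
    fun q => ?_
  rw [Measure.smul_apply, smul_eq_mul, volume_restrict_Ioi_Iio]
  rcases le_or_gt q 0 with hq | hq
  · have hq' : ENNReal.ofReal q = 0 := ENNReal.ofReal_eq_zero.2 (by exact_mod_cast hq)
    rw [hq', mul_zero]
    exact le_antisymm ((hle q).trans_eq hq') bot_le
  · have hq' : (0 : ℝ) < q := by exact_mod_cast hq
    rw [measure_Iio_eq_of_map_mul_left hq' (Measure.map_restrict_eq_smul_of_preimage_ae_eq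
      (measurableEmbedding_mulLeft₀ hq'.ne') (map_mul_left_volume_restrict_Ioi hq') (hs q hq)),
      mul_comm]

theorem ae_mem_or_ae_notMem_of_rat_dilation_invariant {s : Set ℝ} (hsm : NullMeasurableSet s μ₊)
    (hs : ∀ q : ℚ, 0 < q → (fun x => (q : ℝ) * x) ⁻¹' s =ᵐ[μ₊] s) :
    (∀ᵐ x ∂μ₊, x ∈ s) ∨ ∀ᵐ x ∂μ₊, x ∉ s := by
  have h := restrict_eq_smul_of_rat_dilation_invariant hs
  rcases eq_or_ne (μ₊.restrict s (Iio 1)) 0 with h0 | h0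
  · rw [h0, zero_smul, Measure.restrict_eq_zero] at h
    exact .inr (measure_eq_zero_iff_ae_notMem.1 h)
  · rw [← Measure.ae_ennreal_smul_measure_eq h0, ← h]
    exact .inl (ae_restrict_mem₀ hsm)

theorem exists_ae_eq_const_of_rat_dilation_invariant {X : Type*} [MeasurableSpace X]
    [MeasurableSpace.CountablySeparated X] {g : ℝ → X} (hg : NullMeasurable g μ₊)
    (hinv : ∀ q : ℚ, 0 < q → (fun x => g (q * x)) =ᵐ[μ₊] g) :
    ∃ c, g =ᵐ[μ₊] Function.const ℝ c := by
  have : Nonempty X := ⟨g 0⟩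
  refine exists_eventuallyEq_const_of_forall_separating MeasurableSet fun U hU =>
    ae_mem_or_ae_notMem_of_rat_dilation_invariant (hg hU) fun q hq => ?_
  filter_upwards [hinv q hq] with x hx
  change (g (q * x) ∈ U) = (g x ∈ U)
  rw [hx]

theorem eq_of_tendsto_comp_mul_nat_of_rat {X : Type*} [TopologicalSpace X] [T2Space X]
    {g : ℝ → X} {a : ℝ} {x y : X} {q : ℚ} (hq : 0 < q)
    (hx : Tendsto (fun n : ℕ => g (a * n)) atTop (𝓝 x))
    (hy : Tendsto (fun n : ℕ => g (q * a * n)) atTop (𝓝 y)) : y = x := by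
  set p := q.num.toNat
  have hp : 0 < p := by have := Rat.num_pos.2 hq; omega
  have hqp : (q : ℝ) * q.den = p := by
    have : q * q.den = ((p : ℤ) : ℚ) := by
      rw [Int.toNat_of_nonneg (Rat.num_pos.2 hq).le, Rat.mul_den_eq_num]
    exact_mod_cast this
  have hsub : ∀ {k : ℕ}, 0 < k → Tendsto (fun n : ℕ => k * n) atTop atTop :=
    fun hk => tendsto_id.const_mul_atTop' hk
  refine tendsto_nhds_unique ((hy.comp (hsub q.den_pos)).congr fun n => ?_) (hx.comp (hsub hp))
  simp only [Function.comp_apply, Nat.cast_mul]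
  rw [mul_comm (q : ℝ) a, mul_assoc, ← mul_assoc (q : ℝ), hqp]

theorem stmt_4_general (f F : ℝ → ℝ) (hmeas : Measurable f)
    (hF : ∀ᵐ a ∂(volume.restrict (Set.Ioi (0:ℝ))),
      Tendsto (fun n : ℕ => f (a * n)) atTop (nhds (F a))) :
    ∃ C : ℝ, ∀ᵐ a ∂(volume.restrict (Set.Ioi (0:ℝ))), F a = C := by
  have hFm : AEMeasurable F μ₊ := aemeasurable_of_tendsto_metrizable_ae'
    (fun n => (hmeas.comp (measurable_mul_const _)).aemeasurable) hF
  have hinv : ∀ q : ℚ, 0 < q → (fun a => F (q * a)) =ᵐ[μ₊] F := by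
    intro q hq
    filter_upwards [hF, (quasiMeasurePreserving_mul_left_volume_restrict_Ioi
      (Rat.cast_pos.2 hq)).ae hF] with a ha hqa
    exact eq_of_tendsto_comp_mul_nat_of_rat hq ha hqa
  exact exists_ae_eq_const_of_rat_dilation_invariant hFm.nullMeasurable hinv

theorem stmt_4 (f F : ℝ → ℝ) (M : ℝ) (hmeas : Measurable f)
    (hbound : ∀ x ∈ Set.Ioi (0:ℝ), |f x| ≤ M)
    (hF : ∀ᵐ a ∂(volume.restrict (Set.Ioi (0:ℝ))),
      Tendsto (fun n : ℕ => f (a * n)) atTop (nhds (F a))) :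
    ∃ C : ℝ, ∀ᵐ a ∂(volume.restrict (Set.Ioi (0:ℝ))), F a = C :=
  stmt_4_general f F hmeas hF
end

section
/- Let f : (0,∞) → ℝ be measurable and suppose lim_{n→∞} f(a n) = L for almost every a > 0. Then for all ε > 0 and all C > 1, lim_{x→∞} μ({t ∈ [x, Cx] : |f(t) − L| > ε}) / μ([x, Cx]) = 0, where μ is Lebesgue measure. -/
open Filter Set MeasureTheory Topology

/-! Put `B = {t | ε < |f t - L|}` and `A n = {a ∈ [1, K] | a n ∈ B}`. Almost every `a` lies in only
finitely many `A n`, so `μ (A n) → 0` by dominated convergence. Dilation by `n` carries `A n` onto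
`B ∩ [n, K n]`, whence `μ (B ∩ [n, K n]) = n μ (A n) = o(n)`. For `K = 2C` and `n = ⌊x⌋₊` the
interval `[x, C x]` lies in `[n, K n]` (as `x < n + 1 ≤ 2n`) and has length `(C - 1) x ≥ (C - 1) n`. -/

lemma volume_Icc_inter_eq_ofReal_mul (B : Set ℝ) {r : ℝ} (hr : 0 < r) (K : ℝ) :
    volume (Icc r (K * r) ∩ B) = ENNReal.ofReal r * volume (Icc 1 K ∩ (· * r) ⁻¹' B) := by
  have hIcc : (· * r) ⁻¹' Icc r (K * r) = Icc 1 K := by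
    rw [preimage_mul_const_Icc₀ _ _ hr, div_self hr.ne', mul_div_cancel_right₀ _ hr.ne']
  rw [← hIcc, ← preimage_inter, Real.volume_preimage_mul_right hr.ne', abs_of_pos (inv_pos.2 hr),
    ← mul_assoc, ← ENNReal.ofReal_mul hr.le, mul_inv_cancel₀ hr.ne', ENNReal.ofReal_one, one_mul]

lemma tendsto_volume_Icc_inter_preimage_mul_nat {B : Set ℝ} (hB : MeasurableSet B)
    (h : ∀ᵐ a ∂volume.restrict (Ioi (0 : ℝ)), ∀ᶠ n : ℕ in atTop, a * (n : ℝ) ∉ B) (K : ℝ) :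
    Tendsto (fun n : ℕ => volume (Icc 1 K ∩ (· * (n : ℝ)) ⁻¹' B)) atTop (𝓝 0) := by
  have hK : ∀ᵐ a ∂volume.restrict (Icc 1 K), ∀ᶠ n : ℕ in atTop, a * (n : ℝ) ∉ B :=
    ae_restrict_of_ae_restrict_of_subset (fun a ha => zero_lt_one.trans_le ha.1) h
  have := tendsto_measure_of_ae_tendsto_indicator_of_isFiniteMeasure atTop MeasurableSet.empty
    (fun n : ℕ => hB.preimage (measurable_mul_const (n : ℝ)))
    (hK.mono fun a ha => ha.mono fun n hn => iff_of_false hn (notMem_empty a))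
  simpa only [Measure.restrict_apply' measurableSet_Icc, inter_comm, empty_inter, measure_empty]
    using this

lemma volume_Icc_inter_div_volume_Icc_le (B : Set ℝ) {C x : ℝ} (hC : 1 < C) (hx : 1 ≤ x) :
    (volume (Icc x (C * x) ∩ B)).toReal / (volume (Icc x (C * x))).toReal ≤
      (volume (Icc 1 (2 * C) ∩ (· * (⌊x⌋₊ : ℝ)) ⁻¹' B)).toReal / (C - 1) := by
  set n := ⌊x⌋₊
  have hn : (1 : ℝ) ≤ n := Nat.one_le_cast.2 ((Nat.one_le_floor_iff x).2 hx)
  have hnx : (n : ℝ) ≤ x := Nat.floor_le (by linarith)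
  have hxn : x < n + 1 := Nat.lt_floor_add_one x
  have hsub : Icc x (C * x) ∩ B ⊆ Icc (n : ℝ) (2 * C * n) ∩ B :=
    inter_subset_inter_left _ (Icc_subset_Icc hnx (by nlinarith))
  set v := (volume (Icc 1 (2 * C) ∩ (· * (n : ℝ)) ⁻¹' B)).toReal
  have hnum : (volume (Icc x (C * x) ∩ B)).toReal ≤ n * v := by
    have hfin : volume (Icc (n : ℝ) (2 * C * n) ∩ B) ≠ ⊤ :=
      measure_ne_top_of_subset inter_subset_left measure_Icc_lt_top.ne
    have := ENNReal.toReal_mono hfin (measure_mono hsub)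
    rwa [volume_Icc_inter_eq_ofReal_mul B (by linarith) (2 * C), ENNReal.toReal_mul,
      ENNReal.toReal_ofReal (by linarith)] at this
  have hden : (volume (Icc x (C * x))).toReal = (C - 1) * x := by
    rw [Real.volume_Icc, ENNReal.toReal_ofReal (by nlinarith)]; ring
  have hv : 0 ≤ v := ENNReal.toReal_nonneg
  rw [hden, div_le_div_iff₀ (by nlinarith) (by linarith)]
  calc (volume (Icc x (C * x) ∩ B)).toReal * (C - 1) ≤ n * v * (C - 1) := by gcongr
    _ ≤ v * ((C - 1) * x) := by
      linear_combination mul_nonneg (mul_nonneg hv (sub_nonneg.2 hC.le)) (sub_nonneg.2 hnx)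

theorem tendsto_volume_Icc_inter_div_volume_Icc {B : Set ℝ} (hB : MeasurableSet B)
    (h : ∀ᵐ a ∂volume.restrict (Ioi (0 : ℝ)), ∀ᶠ n : ℕ in atTop, a * (n : ℝ) ∉ B)
    {C : ℝ} (hC : 1 < C) :
    Tendsto (fun x => (volume (Icc x (C * x) ∩ B)).toReal / (volume (Icc x (C * x))).toReal)
      atTop (𝓝 0) := by
  have hA := (tendsto_volume_Icc_inter_preimage_mul_nat hB h (2 * C)).comp
    (tendsto_nat_floor_atTop (α := ℝ))
  replace hA := ((ENNReal.tendsto_toReal ENNReal.zero_ne_top).comp hA).div_const (C - 1)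
  rw [ENNReal.toReal_zero, zero_div] at hA
  refine tendsto_of_tendsto_of_tendsto_of_le_of_le' tendsto_const_nhds hA
    (Eventually.of_forall fun x => by positivity) ?_
  filter_upwards [eventually_ge_atTop 1] with x hx
  exact volume_Icc_inter_div_volume_Icc_le B hC hx

theorem stmt_6 (f : ℝ → ℝ) (L : ℝ) (hmeas : Measurable f)
    (h : ∀ᵐ a ∂(volume.restrict (Set.Ioi (0:ℝ))),
      Tendsto (fun n : ℕ => f (a * n)) atTop (nhds L)) :
    ∀ ε > (0:ℝ), ∀ C > (1:ℝ),
      Tendsto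
        (fun x : ℝ =>
          (volume {t ∈ Set.Icc x (C * x) | ε < |f t - L|}).toReal /
            (volume (Set.Icc x (C * x))).toReal)
        atTop (nhds 0) := by
  intro ε hε C hC
  refine tendsto_volume_Icc_inter_div_volume_Icc
    (measurableSet_lt measurable_const (hmeas.sub_const L).abs) ?_ hC
  filter_upwards [h] with a ha
  filter_upwards [Metric.tendsto_nhds.mp ha ε hε] with n hn
  exact not_lt.2 (Real.dist_eq _ _ ▸ hn.le)
end
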